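/- arXiv:1803.06933 — 3 statements merged into one kernel-verified Lean document; each statement's English description precedes it below -/
import Mathlib

section
/- Let (X,d) be a metric space, m ≥ 1 an integer, φ a comparison function, and (f_i)_{i∈I} a family of functions f_i : X^m → X each of which is a φ-contraction. Then the family (f_i)_{i∈I} is uniformly Meir-Keeler. -/
open Set

/-- A comparison function `φ : [0,∞) → [0,∞)`: nondecreasing, right-continuous,
and `φ(t) < t` for `t > 0`. -/
def IsComparisonFun (φ : ℝ → ℝ) : Prop :=
  (∀ t : ℝ, 0 ≤ t → 0 ≤ φ t) ∧ MonotoneOn φ (Set.Ici 0) ∧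
    (∀ t : ℝ, 0 ≤ t → ContinuousWithinAt φ (Set.Ici t) t) ∧
    (∀ t : ℝ, 0 < t → φ t < t)

theorem MonotoneOn.exists_forall_Ico_lt_of_continuousWithinAt {φ : ℝ → ℝ} {ε c : ℝ}
    (hmono : MonotoneOn φ (Ici 0)) (hε : 0 ≤ ε) (hcont : ContinuousWithinAt φ (Ici ε) ε)
    (hc : φ ε < c) : ∃ δ > 0, ∀ t ∈ Ico 0 (ε + δ), φ t < c := by
  obtain ⟨u, hεu, hu⟩ :=
    mem_nhdsGE_iff_exists_Ico_subset.1 (hcont.eventually (Iio_mem_nhds hc))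
  refine ⟨u - ε, sub_pos.2 hεu, fun t ⟨ht0, htu⟩ => ?_⟩
  rcases le_or_gt t ε with htε | hεt
  · exact (hmono ht0 hε htε).trans_lt hc
  · exact hu ⟨hεt.le, by linarith⟩

theorem IsComparisonFun.exists_forall_Ico_lt_sub {φ : ℝ → ℝ} (hφ : IsComparisonFun φ)
    {ε : ℝ} (hε : 0 < ε) : ∃ δ > 0, ∃ lam > 0, ∀ t ∈ Ico 0 (ε + δ), φ t < ε - lam := by
  obtain ⟨-, hmono, hcont, hlt⟩ := hφ
  have hφε := hlt ε hε
  obtain ⟨δ, hδ, h⟩ := hmono.exists_forall_Ico_lt_of_continuousWithinAt hε.le (hcont ε hε.le)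
    (c := ε - (ε - φ ε) / 2) (by linarith)
  exact ⟨δ, hδ, (ε - φ ε) / 2, by linarith, h⟩

theorem uniformly_meir_keeler_of_phi_contractions_general (X : Type) [MetricSpace X]
    (m : ℕ) (I : Type) (φ : ℝ → ℝ) (hφ : IsComparisonFun φ)
    (f : I → (Fin m → X) → X)
    (hc : ∀ (i : I) (x y : Fin m → X), dist (f i x) (f i y) ≤ φ (dist x y)) :
    ∀ ε : ℝ, 0 < ε → ∃ δ : ℝ, 0 < δ ∧ ∃ lam : ℝ, 0 < lam ∧
      ∀ (i : I) (x y : Fin m → X), dist x y < ε + δ →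
        dist (f i x) (f i y) < ε - lam := by
  intro ε hε
  obtain ⟨δ, hδ, lam, hlam, hφ_lt⟩ := hφ.exists_forall_Ico_lt_sub hε
  exact ⟨δ, hδ, lam, hlam, fun i x y hxy => (hc i x y).trans_lt (hφ_lt _ ⟨dist_nonneg, hxy⟩)⟩

/-- STATEMENT 8: a family `(f_i)_{i∈I}` of `φ`-contractions `f_i : X^m → X`
(`φ` a comparison function, `X^m` with the maximum metric) is uniformly
Meir-Keeler. -/
theorem uniformly_meir_keeler_of_phi_contractions (X : Type) [MetricSpace X]
    (m : ℕ) (hm : 1 ≤ m) (I : Type) (φ : ℝ → ℝ) (hφ : IsComparisonFun φ)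
    (f : I → (Fin m → X) → X)
    (hc : ∀ (i : I) (x y : Fin m → X), dist (f i x) (f i y) ≤ φ (dist x y)) :
    ∀ ε : ℝ, 0 < ε → ∃ δ : ℝ, 0 < δ ∧ ∃ lam : ℝ, 0 < lam ∧
      ∀ (i : I) (x y : Fin m → X), dist x y < ε + δ →
        dist (f i x) (f i y) < ε - lam :=
  uniformly_meir_keeler_of_phi_contractions_general X m I φ hφ f hc
end

section
/- Let F = ((X,d),(f_i)_{i∈I}) be a generalized possibly infinite iterated function system of order m with (X,d) complete and the family (f_i)_{i∈I} uniformly Meir-Keeler, and let A_F be its attractor. Then lim_{n→∞} sup_{α ∈ _nΩ} diam(f_α(A_F,…,A_F)) = 0, where f_α(A_F,…,A_F) is the image of (A_F)^{m^n} under f_α and diam denotes the diameter. -/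
/-- A generalized possibly infinite iterated function system of order `m`:
a family of continuous maps `f_i : X^m → X` (with `X^m` carrying the maximum
metric, i.e. the product metric on `Fin m → X`) which is bounded as a family. -/
structure GIFS (I : Type) (m : ℕ) (X : Type) [MetricSpace X] where
  f : I → (Fin m → X) → X
  cont : ∀ i : I, Continuous (f i)
  bddFam : ∀ B : Set (Fin m → X), Bornology.IsBounded B →
    Bornology.IsBounded (⋃ i : I, f i '' B)

/-- `Word I m k` encodes the set of words `_{k+1}Ω = Ω₁ × ⋯ × Ω_{k+1}`, via the
bijection `α ↔ (α¹, (α(1),…,α(m)))`. -/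
def Word (I : Type) (m : ℕ) : ℕ → Type
  | 0 => I
  | k + 1 => I × (Fin m → Word I m k)

/-- `XP Y m k` is `Y^{m^k}`. -/
def XP (Y : Type) (m : ℕ) : ℕ → Type
  | 0 => Y
  | k + 1 => Fin m → XP Y m k

/-- Given a family `base = (f_i)_{i∈I}`, `f_i : Y^m → Y`, extend it to words by
`f_{α¹α²…α^{k+1}}(x₁,…,x_m) = f_{α¹}(f_{α(1)}(x₁),…,f_{α(m)}(x_m))`. -/
def tExt {I Y : Type} {m : ℕ} (base : I → (Fin m → Y) → Y) :
    ∀ k : ℕ, Word I m k → XP Y m (k + 1) → Y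
  | 0, i, x => base i (fun j => x j)
  | k + 1, w, x => base w.1 (fun j => tExt base k (w.2 j) (x j))

/-- The set `A^{m^k} ⊆ X^{m^k}`. -/
def allInXP {X : Type} {m : ℕ} (A : Set X) : ∀ k : ℕ, Set (XP X m k)
  | 0 => A
  | k + 1 => {x | ∀ j : Fin m, x j ∈ allInXP A k}

/-- The fractal operator `F_F(B₁,…,B_m) = cl(∪_{i∈I} f_i(B₁ × ⋯ × B_m))`. -/
def FracOpF {I X : Type} {m : ℕ} [MetricSpace X] (f : I → (Fin m → X) → X)
    (B : Fin m → Set X) : Set X :=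
  closure (⋃ i : I, f i '' Set.univ.pi B)

/-!
Since `A` is invariant, every piece `f_α(A, …, A)` lies in `A`, so the suprema `e n` of the
diameters of the pieces of level `n` are finite. A piece of level `n + 1` lies in
`f_i(P₁ × ⋯ × P_m)` for pieces `P_j` of level `n`, and `X^m` carries the maximum metric, so
`e (n + 1)` is bounded by the diameters of images of sets of diameter `≤ e n` under the `f_i`. Meir-Keeler maps
are nonexpansive, hence `e` decreases to some `L`; if `L > 0`, the Meir-Keeler condition at `ε = L`
pushes some `e (n + 1)` below `L - λ`, which is absurd.
-/

open Set Filter Metric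
open scoped ENNReal Topology

def IsUniformMeirKeeler {ι α β : Type*} [PseudoMetricSpace α] [PseudoMetricSpace β]
    (f : ι → α → β) : Prop :=
  ∀ ε : ℝ, 0 < ε → ∃ δ : ℝ, 0 < δ ∧ ∃ lam : ℝ, 0 < lam ∧
    ∀ (i : ι) (x y : α), dist x y < ε + δ → dist (f i x) (f i y) < ε - lam

namespace IsUniformMeirKeeler

variable {ι α β : Type*} [PseudoMetricSpace α] [PseudoMetricSpace β] {f : ι → α → β}

theorem lipschitzWith_one (hf : IsUniformMeirKeeler f) (i : ι) : LipschitzWith 1 (f i) := by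
  refine LipschitzWith.of_dist_le_mul fun x y => le_of_forall_gt_imp_ge_of_dense fun ε hε => ?_
  rw [NNReal.coe_one, one_mul] at hε
  obtain ⟨δ, hδ, lam, hlam, h⟩ := hf ε (dist_nonneg.trans_lt hε)
  linarith [h i x y (by linarith)]

theorem exists_ediam_image_le (hf : IsUniformMeirKeeler f) {ε : ℝ} (hε : 0 < ε) :
    ∃ δ : ℝ, 0 < δ ∧ ∃ lam : ℝ, 0 < lam ∧ ∀ (i : ι) (s : Set α),
      ediam s < ENNReal.ofReal (ε + δ) → ediam (f i '' s) ≤ ENNReal.ofReal (ε - lam) := by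
  obtain ⟨δ, hδ, lam, hlam, h⟩ := hf ε hε
  refine ⟨δ, hδ, lam, hlam, fun i s hs => ediam_image_le_iff.2 fun x hx y hy => ?_⟩
  rw [edist_dist]
  exact ENNReal.ofReal_le_ofReal
    (h i x y (edist_lt_ofReal.1 ((edist_le_ediam_of_mem hx hy).trans_lt hs))).le

end IsUniformMeirKeeler

theorem ENNReal.tendsto_zero_of_meirKeeler {e : ℕ → ℝ≥0∞} (he : Antitone e) (h0 : e 0 ≠ ∞)
    (hstep : ∀ ε : ℝ, 0 < ε → ∃ δ : ℝ, 0 < δ ∧ ∃ lam : ℝ, 0 < lam ∧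
      ∀ n, e n < ENNReal.ofReal (ε + δ) → e (n + 1) ≤ ENNReal.ofReal (ε - lam)) :
    Tendsto e atTop (𝓝 0) := by
  suffices hL : ⨅ n, e n = 0 from hL ▸ tendsto_atTop_iInf he
  set L := ⨅ n, e n
  by_contra hL0
  have hLtop : L ≠ ∞ := ne_top_of_le_ne_top h0 (iInf_le e 0)
  have hε : 0 < L.toReal := ENNReal.toReal_pos hL0 hLtop
  obtain ⟨δ, hδ, lam, hlam, h⟩ := hstep L.toReal hε
  have hlt : L < ENNReal.ofReal (L.toReal + δ) := by
    rw [ENNReal.ofReal_add hε.le hδ.le, ENNReal.ofReal_toReal hLtop]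
    exact ENNReal.lt_add_right hLtop (ENNReal.ofReal_pos.2 hδ).ne'
  obtain ⟨n, hn⟩ := iInf_lt_iff.1 hlt
  have hdrop : ENNReal.ofReal (L.toReal - lam) < L := by
    conv_rhs => rw [← ENNReal.ofReal_toReal hLtop]
    exact (ENNReal.ofReal_lt_ofReal_iff hε).2 (by linarith)
  exact ((iInf_le e (n + 1)).trans (h n hn)).not_gt hdrop

section WordMaps

variable {I Y : Type} {m : ℕ}

theorem mapsTo_tExt {base : I → (Fin m → Y) → Y} {A : Set Y}
    (hA : ∀ i, MapsTo (base i) (univ.pi fun _ => A) A) :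
    ∀ (k : ℕ) (w : Word I m k), MapsTo (tExt base k w) (allInXP A (k + 1)) A
  | 0, w, _, hx => hA w fun j _ => hx j
  | k + 1, w, _, hx => hA w.1 fun j _ => mapsTo_tExt hA k (w.2 j) (hx j)

theorem image_tExt_succ_subset (base : I → (Fin m → Y) → Y) (A : Set Y) (n : ℕ)
    (w : Word I m (n + 1)) :
    tExt base (n + 1) w '' allInXP A (n + 2) ⊆
      base w.1 '' univ.pi fun j => tExt base n (w.2 j) '' allInXP A (n + 1) := by
  rintro _ ⟨x, hx, rfl⟩
  exact ⟨_, fun j _ => ⟨x j, hx j, rfl⟩, rfl⟩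

end WordMaps

section WordImageDiam

variable {I X : Type} {m : ℕ} [MetricSpace X]

/-- `sup_{α ∈ _{n+1}Ω} diam f_α(A, …, A)` (note the shift: `Word I m n` encodes `_{n+1}Ω`). -/
noncomputable def wordImageDiam (base : I → (Fin m → X) → X) (A : Set X) (n : ℕ) : ℝ≥0∞ :=
  ⨆ w : Word I m n, ediam (tExt base n w '' allInXP A (n + 1))

theorem wordImageDiam_succ_le {base : I → (Fin m → X) → X} {A : Set X} {n : ℕ} {c : ℝ≥0∞}
    (h : ∀ i (s : Set (Fin m → X)), ediam s ≤ wordImageDiam base A n → ediam (base i '' s) ≤ c) :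
    wordImageDiam base A (n + 1) ≤ c :=
  iSup_le fun w => (ediam_mono (image_tExt_succ_subset base A n w)).trans <|
    h w.1 _ <| ediam_pi_le_of_le fun j =>
      le_iSup (fun v => ediam (tExt base n v '' allInXP A (n + 1))) (w.2 j)

theorem wordImageDiam_le_ediam {base : I → (Fin m → X) → X} {A : Set X}
    (hA : ∀ i, MapsTo (base i) (univ.pi fun _ => A) A) (n : ℕ) :
    wordImageDiam base A n ≤ ediam A :=
  iSup_le fun w => ediam_mono (mapsTo_tExt hA n w).image_subset

end WordImageDiam

theorem diam_tendsto_zero_general (I : Type) (m : ℕ)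
    (X : Type) [MetricSpace X] (F : GIFS I m X)
    (hUMK : ∀ ε : ℝ, 0 < ε → ∃ δ : ℝ, 0 < δ ∧ ∃ lam : ℝ, 0 < lam ∧
      ∀ (i : I) (x y : Fin m → X), dist x y < ε + δ →
        dist (F.f i x) (F.f i y) < ε - lam)
    (A : Set X)
    (hAbd : Bornology.IsBounded A) (hAfix : FracOpF F.f (fun _ => A) = A) :
    Filter.Tendsto
      (fun n : ℕ => ⨆ w : Word I m n, EMetric.diam (tExt F.f n w '' allInXP A (n + 1)))
      Filter.atTop (nhds 0) := by
  show Tendsto (wordImageDiam F.f A) atTop (𝓝 0)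
  have hUMK : IsUniformMeirKeeler F.f := hUMK
  have hinv : ∀ i, MapsTo (F.f i) (univ.pi fun _ => A) A := fun i x hx =>
    hAfix ▸ subset_closure (mem_iUnion.2 ⟨i, x, hx, rfl⟩)
  have hfin : wordImageDiam F.f A 0 ≠ ∞ :=
    ne_top_of_le_ne_top hAbd.ediam_ne_top (wordImageDiam_le_ediam hinv 0)
  refine ENNReal.tendsto_zero_of_meirKeeler (antitone_nat_of_succ_le fun n => ?_) hfin ?_
  · exact wordImageDiam_succ_le fun i s hs =>
      ((hUMK.lipschitzWith_one i).ediam_image_le s).trans (by rwa [ENNReal.coe_one, one_mul])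
  · intro ε hε
    obtain ⟨δ, hδ, lam, hlam, h⟩ := hUMK.exists_ediam_image_le hε
    exact ⟨δ, hδ, lam, hlam, fun n hn =>
      wordImageDiam_succ_le fun i s hs => h i s (hs.trans_lt hn)⟩

/-- STATEMENT 13 (equation (1) of Remark 1.16): if `(X,d)` is complete, the family
`(f_i)_{i∈I}` is uniformly Meir-Keeler and `A_F` is the attractor of `F`, then
`lim_{n→∞} sup_{α ∈ _nΩ} diam (f_α(A_F,…,A_F)) = 0` (here `Word I m n` encodes
`_{n+1}Ω`, `tExt F.f n w` is `f_w : X^{m^{n+1}} → X`, `allInXP A (n+1)` is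
`A^{m^{n+1}}`, and the diameters are extended diameters in `ℝ≥0∞`). -/
theorem diam_tendsto_zero (I : Type) [Nonempty I] (m : ℕ) (hm : 1 ≤ m)
    (X : Type) [MetricSpace X] [CompleteSpace X] (F : GIFS I m X)
    (hUMK : ∀ ε : ℝ, 0 < ε → ∃ δ : ℝ, 0 < δ ∧ ∃ lam : ℝ, 0 < lam ∧
      ∀ (i : I) (x y : Fin m → X), dist x y < ε + δ →
        dist (F.f i x) (F.f i y) < ε - lam)
    (A : Set X) (hAne : A.Nonempty) (hAcl : IsClosed A)
    (hAbd : Bornology.IsBounded A) (hAfix : FracOpF F.f (fun _ => A) = A) :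
    Filter.Tendsto
      (fun n : ℕ => ⨆ w : Word I m n, EMetric.diam (tExt F.f n w '' allInXP A (n + 1)))
      Filter.atTop (nhds 0) :=
  diam_tendsto_zero_general I m X F hUMK A hAbd hAfix
end

section
/- Let X = [0,1] with the euclidean metric and, for each n ∈ ℕ, let f_n : [0,1] × [0,1] → [0,1] be defined by f_n(x,y) = (x+y)/2^{n+2} + 1/2^{n+1}. Then the family (f_n)_{n∈ℕ} is uniformly Meir-Keeler: for every ε > 0, taking δ = ε/3 and λ = ε/9, one has |f_n(u) − f_n(v)| < ε − λ for every n ∈ ℕ and all u,v ∈ [0,1]² with d_max(u,v) < ε + δ. Moreover, the attractor of the GIFS F = (([0,1],d),(f_n)_{n∈ℕ}) of order 2 is A_F = [0,1]. -/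
/-- `f_n(x,y) = (x+y)/2^{n+2} + 1/2^{n+1}` on `[0,1]² → [0,1]`. -/
noncomputable def fEx (n : ℕ) (p : Fin 2 → unitInterval) : unitInterval :=
  ⟨((p 0 : ℝ) + (p 1 : ℝ)) / 2 ^ (n + 2) + 1 / 2 ^ (n + 1), by
    have h00 : (0 : ℝ) ≤ (p 0 : ℝ) := (p 0).2.1
    have h01 : (p 0 : ℝ) ≤ 1 := (p 0).2.2
    have h10 : (0 : ℝ) ≤ (p 1 : ℝ) := (p 1).2.1
    have h11 : (p 1 : ℝ) ≤ 1 := (p 1).2.2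
    have h1 : (1 : ℝ) ≤ 2 ^ n := one_le_pow₀ (by norm_num)
    constructor
    · exact add_nonneg (div_nonneg (add_nonneg h00 h10) (by positivity)) (by positivity)
    · have key : ((p 0 : ℝ) + (p 1 : ℝ)) / 2 ^ (n + 2) + 1 / 2 ^ (n + 1)
          ≤ 2 / 2 ^ (n + 2) + 1 / 2 ^ (n + 1) := by
        gcongr
        linarith
      have eq1 : (2 : ℝ) / 2 ^ (n + 2) + 1 / 2 ^ (n + 1) = 1 / 2 ^ n := by
        field_simp
        ring
      have le1 : (1 : ℝ) / 2 ^ n ≤ 1 := by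
        rw [div_le_one (by positivity)]
        exact h1
      linarith⟩

/-!
Each `f_n` is `1/2`-Lipschitz for the maximum metric, which gives continuity and the
Meir-Keeler bound. On the diagonal, `f_n(x, x) = (x + 1) / 2^(n+1)`, so every `t ∈ (0, 1]` is
`f_n(x, x)` for some `n` and `x`. A nonempty closed set `A` invariant under these diagonal maps
contains `0 = lim f_n(a, a)`, and `d(t, A) ≤ d(x, A) / 2` for `t = f_n(x, x)`; iterating,
`d(t, A) ≤ 2^-k` for every `k`, so `A = [0, 1]`. Both `F_F([0,1], [0,1])` and every fixed point of
`F_F` are such sets.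
-/
open Metric Filter Topology Set

lemma apply_mem_fracOpF {I X : Type} {m : ℕ} [MetricSpace X] {f : I → (Fin m → X) → X}
    {B : Fin m → Set X} (i : I) {p : Fin m → X} (hp : ∀ j, p j ∈ B j) : f i p ∈ FracOpF f B :=
  subset_closure <| mem_iUnion.2 ⟨i, mem_image_of_mem _ fun j _ => hp j⟩

lemma Metric.infDist_apply_le_of_mapsTo {α : Type*} [PseudoMetricSpace α] {g : α → α}
    {s : Set α} {K : ℝ} (hK : 0 < K) (hg : ∀ x y, dist (g x) (g y) ≤ K * dist x y)
    (hs : MapsTo g s s) (hne : s.Nonempty) (x : α) : infDist (g x) s ≤ K * infDist x s := by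
  rw [← div_le_iff₀' hK]
  refine (le_infDist hne).2 fun y hy => ?_
  rw [div_le_iff₀' hK]
  exact (infDist_le_dist_of_mem (hs hy)).trans (hg x y)

lemma fEx_coe (n : ℕ) (p : Fin 2 → unitInterval) :
    (fEx n p : ℝ) = ((p 0 : ℝ) + p 1) / 2 ^ (n + 2) + 1 / 2 ^ (n + 1) :=
  rfl

lemma dist_fEx_le (n : ℕ) (u v : Fin 2 → unitInterval) :
    dist (fEx n u) (fEx n v) ≤ 2⁻¹ * dist u v := by
  have h0 := dist_le_pi_dist u v 0
  have h1 := dist_le_pi_dist u v 1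
  rw [Subtype.dist_eq, Real.dist_eq] at h0 h1 ⊢
  have h4 : (4 : ℝ) ≤ 2 ^ (n + 2) := by
    calc (4 : ℝ) = 2 ^ 2 := by norm_num
      _ ≤ 2 ^ (n + 2) := pow_le_pow_right₀ (by norm_num) (by omega)
  calc |(fEx n u : ℝ) - fEx n v|
      = |(((u 0 : ℝ) - v 0) + ((u 1 : ℝ) - v 1)) / 2 ^ (n + 2)| := by
        rw [fEx_coe, fEx_coe]
        congr 1
        ring
    _ = |((u 0 : ℝ) - v 0) + ((u 1 : ℝ) - v 1)| / 2 ^ (n + 2) := by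
        rw [abs_div, abs_of_pos (by positivity : (0 : ℝ) < 2 ^ (n + 2))]
    _ ≤ (|(u 0 : ℝ) - v 0| + |(u 1 : ℝ) - v 1|) / 4 := by
        gcongr
        exact abs_add_le _ _
    _ ≤ 2⁻¹ * dist u v := by linarith

lemma continuous_fEx (n : ℕ) : Continuous (fEx n) :=
  (LipschitzWith.of_dist_le' (dist_fEx_le n)).continuous

lemma fEx_const_coe (n : ℕ) (x : unitInterval) :
    (fEx n (fun _ => x) : ℝ) = (x + 1) / 2 ^ (n + 1) := by
  rw [fEx_coe, pow_succ 2 (n + 1)]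
  field_simp
  ring

lemma dist_fEx_const_le (n : ℕ) (x y : unitInterval) :
    dist (fEx n (fun _ => x)) (fEx n (fun _ => y)) ≤ 2⁻¹ * dist x y :=
  (dist_fEx_le n _ _).trans_eq (by rw [dist_pi_const])

lemma tendsto_fEx_const (x : unitInterval) :
    Tendsto (fun n => fEx n (fun _ => x)) atTop (𝓝 0) := by
  simp only [tendsto_subtype_rng, fEx_const_coe, Set.Icc.coe_zero]
  exact tendsto_const_nhds.div_atTop
    ((tendsto_pow_atTop_atTop_of_one_lt one_lt_two).comp (tendsto_add_atTop_nat 1))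

-- `x ↦ f_n(x, x)` maps `[0, 1]` onto `[2^-(n+1), 2^-n]`, and these intervals cover `(0, 1]`.
lemma exists_fEx_const_eq {t : unitInterval} (ht : 0 < (t : ℝ)) :
    ∃ (n : ℕ) (x : unitInterval), fEx n (fun _ => x) = t := by
  obtain ⟨n, hlow, hhigh⟩ := exists_nat_pow_near (one_le_one_div ht t.2.2) one_lt_two
  rw [le_div_iff₀ ht] at hlow
  rw [div_lt_iff₀ ht] at hhigh
  refine ⟨n, ⟨2 ^ (n + 1) * t - 1, ?_, ?_⟩, Subtype.ext ?_⟩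
  · linarith
  · rw [pow_succ]; nlinarith
  · rw [fEx_const_coe]
    field_simp
    ring

lemma eq_univ_of_fEx_const_mem {A : Set unitInterval} (hne : A.Nonempty) (hA : IsClosed A)
    (hmaps : ∀ n, ∀ a ∈ A, fEx n (fun _ => a) ∈ A) : A = univ := by
  obtain ⟨a, ha⟩ := hne
  have hzero : (0 : unitInterval) ∈ A :=
    hA.mem_of_tendsto (tendsto_fEx_const a) (Eventually.of_forall fun n => hmaps n a ha)
  have hbound : ∀ k : ℕ, ∀ t : unitInterval, infDist t A ≤ 2⁻¹ ^ k := by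
    intro k
    induction k with
    | zero =>
      intro t
      calc infDist t A ≤ dist t 0 := infDist_le_dist_of_mem hzero
        _ ≤ 2⁻¹ ^ 0 := by
          rw [Subtype.dist_eq, Real.dist_eq, Set.Icc.coe_zero, sub_zero, abs_of_nonneg t.2.1,
            pow_zero]
          exact t.2.2
    | succ k ih =>
      intro t
      rcases t.2.1.eq_or_lt with ht | ht
      · rw [show t = 0 from Subtype.ext ht.symm, infDist_zero_of_mem hzero]
        positivity
      · obtain ⟨n, x, rfl⟩ := exists_fEx_const_eq ht
        calc infDist (fEx n fun _ => x) A ≤ 2⁻¹ * infDist x A :=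
              infDist_apply_le_of_mapsTo (by norm_num) (dist_fEx_const_le n)
                (fun a ha => hmaps n a ha) ⟨a, ha⟩ x
          _ ≤ 2⁻¹ ^ (k + 1) := by rw [pow_succ']; gcongr; exact ih x
  refine eq_univ_of_forall fun t => ?_
  rw [← hA.closure_eq, mem_closure_iff_infDist_zero ⟨a, ha⟩]
  refine le_antisymm ?_ infDist_nonneg
  exact ge_of_tendsto' (tendsto_pow_atTop_nhds_zero_of_lt_one (by norm_num) (by norm_num))
    fun k => hbound k t

/-- STATEMENT 19 (the example of Section 5): the maps `f_n` form a GIFS of order 2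
on `[0,1]` (in particular each `f_n` is continuous); the family `(f_n)_{n∈ℕ}` is
uniformly Meir-Keeler with `δ_ε = ε/3` and `λ_ε = ε/9`; and the attractor of
`F = (([0,1],d),(f_n)_{n∈ℕ})` is `A_F = [0,1]`, i.e. the whole space `[0,1]` is
the unique nonempty closed bounded fixed point of the fractal operator. -/
theorem example_uniformly_meir_keeler_and_attractor :
    (∀ n : ℕ, Continuous (fEx n)) ∧
    (∀ ε : ℝ, 0 < ε → ∀ (n : ℕ) (u v : Fin 2 → unitInterval),
      dist u v < ε + ε / 3 → dist (fEx n u) (fEx n v) < ε - ε / 9) ∧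
    FracOpF fEx (fun _ => (Set.univ : Set unitInterval)) = Set.univ ∧
    (∀ A : Set unitInterval, A.Nonempty → IsClosed A → Bornology.IsBounded A →
      FracOpF fEx (fun _ => A) = A → A = Set.univ) := by
  refine ⟨continuous_fEx, ?_, ?_, ?_⟩
  · intro ε hε n u v huv
    linarith [dist_fEx_le n u v]
  · exact eq_univ_of_fEx_const_mem ⟨_, apply_mem_fracOpF 0 fun _ => mem_univ 0⟩
      isClosed_closure fun n a _ => apply_mem_fracOpF n fun _ => mem_univ a
  · intro A hne hA _ hfix
    refine eq_univ_of_fEx_const_mem hne hA fun n a ha => ?_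
    rw [← hfix]
    exact apply_mem_fracOpF n fun _ => ha
end
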